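/- Let g_0 : ℝ → ℝ be smooth on (0,∞), and define a sequence of functions by g_{j+1}(r) = −g_j'(r)/r. Then for every j ≥ 1 and every r > 0, g_j(r) = Σ_{k=1}^{j} (−1)^k · d_k^j · g_0^{(k)}(r) · r^{k−2j}, where g_0^{(k)} denotes the k-th derivative of g_0 and d_k^j = (2j−k−1)! / (2^{j−k}·(j−k)!·(k−1)!) for 1 ≤ k ≤ j. -/

import Mathlib

/-- Given `g₀ : ℝ → ℝ`, the sequence of functions defined inductively by
`g_{j+1}(r) = −g_j'(r)/r`. -/
noncomputable def radSeq (g0 : ℝ → ℝ) : ℕ → ℝ → ℝ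
  | 0 => g0
  | j + 1 => fun r => -(deriv (radSeq g0 j) r) / r

/-- The coefficients `d_k^j = (2j−k−1)! / (2^{j−k}·(j−k)!·(k−1)!)` for `1 ≤ k ≤ j`,
extended by `0` outside that range. -/
noncomputable def dcoef (j k : ℕ) : ℝ :=
  if 1 ≤ k ∧ k ≤ j then
    (Nat.factorial (2 * j - k - 1) : ℝ)
      / (2 ^ (j - k) * Nat.factorial (j - k) * Nat.factorial (k - 1))
  else 0

lemma dcoef_eq {j k : ℕ} (h1 : 1 ≤ k) (h2 : k ≤ j) :
    dcoef j k = (Nat.factorial (2 * j - k - 1) : ℝ)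
      / (2 ^ (j - k) * Nat.factorial (j - k) * Nat.factorial (k - 1)) := by
  rw [dcoef, if_pos ⟨h1, h2⟩]

lemma dcoef_zero {j k : ℕ} (h : ¬ (1 ≤ k ∧ k ≤ j)) : dcoef j k = 0 := by
  rw [dcoef, if_neg h]

lemma dcoef_rec (j k : ℕ) (hj : 1 ≤ j) (hk1 : 1 ≤ k) (hk2 : k ≤ j + 1) :
    dcoef (j + 1) k = dcoef j (k - 1) + ((2 * j : ℝ) - k) * dcoef j k := by
  rcases eq_or_lt_of_le hk2 with rfl | hlt
  · -- k = j + 1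
    have e0 : j + 1 - 1 = j := by omega
    rw [e0, show dcoef j (j + 1) = 0 from dcoef_zero (by omega),
      dcoef_eq (by omega) le_rfl, dcoef_eq hj le_rfl]
    have e1 : 2 * (j + 1) - (j + 1) - 1 = j := by omega
    have e2 : (j + 1) - (j + 1) = 0 := by omega
    have e3 : 2 * j - j - 1 = j - 1 := by omega
    have e4 : j - j = 0 := by omega
    have e5 : (j + 1) - 1 = j := by omega
    rw [e1, e2, e3, e4, e5]
    simp only [pow_zero, Nat.factorial_zero, Nat.cast_one, one_mul, mul_one]
    rw [div_self (by positivity), div_self (by positivity)]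
    ring
  have hkj : k ≤ j := by omega
  rcases Nat.lt_or_ge k 2 with hk2' | hk2'
  · -- k = 1
    interval_cases k
    rw [dcoef_eq le_rfl (by omega), dcoef_eq le_rfl hkj]
    simp only [Nat.sub_self]
    rw [dcoef_zero (by omega)]
    obtain ⟨m, rfl⟩ : ∃ m, j = m + 1 := ⟨j - 1, by omega⟩
    have e1 : 2 * (m + 1 + 1) - 1 - 1 = 2 * m + 2 := by omega
    have e2 : m + 1 + 1 - 1 = m + 1 := by omega
    have e3 : 2 * (m + 1) - 1 - 1 = 2 * m := by omega
    have e4 : m + 1 - 1 = m := by omega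
    rw [e1, e2, e3, e4]
    have f1 : Nat.factorial (2 * m + 2) = (2 * m + 2) * ((2 * m + 1) * Nat.factorial (2 * m)) := by
      rw [show 2 * m + 2 = (2 * m + 1) + 1 by ring, Nat.factorial_succ, Nat.factorial_succ]
    have f2 : Nat.factorial (m + 1) = (m + 1) * Nat.factorial m := Nat.factorial_succ m
    rw [f1, f2]
    have h0 : (Nat.factorial (2 * m) : ℝ) ≠ 0 := by positivity
    have h1 : (Nat.factorial m : ℝ) ≠ 0 := by positivity
    have h2 : (2 : ℝ) ^ m ≠ 0 := by positivity
    simp only [Nat.factorial]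
    push_cast
    field_simp
    ring
  · -- 2 ≤ k ≤ j
    obtain ⟨l, rfl⟩ : ∃ l, k = l + 2 := ⟨k - 2, by omega⟩
    obtain ⟨a, rfl⟩ : ∃ a, j = l + 2 + a := ⟨j - (l + 2), by omega⟩
    rw [dcoef_eq (by omega) (by omega), dcoef_eq (by omega) (by omega),
      dcoef_eq (by omega) (by omega)]
    have e1 : 2 * (l + 2 + a + 1) - (l + 2) - 1 = l + 2 * a + 3 := by omega
    have e2 : l + 2 + a + 1 - (l + 2) = a + 1 := by omega
    have e3 : l + 2 - 1 = l + 1 := by omega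
    have e4 : 2 * (l + 2 + a) - (l + 1) - 1 = l + 2 * a + 2 := by omega
    have e5 : l + 2 + a - (l + 1) = a + 1 := by omega
    have e6 : l + 1 - 1 = l := by omega
    have e7 : 2 * (l + 2 + a) - (l + 2) - 1 = l + 2 * a + 1 := by omega
    have e8 : l + 2 + a - (l + 2) = a := by omega
    rw [e1, e2, e3, e4, e5, e6, e7, e8]
    have f1 : Nat.factorial (l + 2 * a + 3)
        = (l + 2 * a + 3) * ((l + 2 * a + 2) * Nat.factorial (l + 2 * a + 1)) := by
      rw [show l + 2 * a + 3 = (l + 2 * a + 2) + 1 by ring, Nat.factorial_succ,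
        show l + 2 * a + 2 = (l + 2 * a + 1) + 1 by ring, Nat.factorial_succ]
    have f2 : Nat.factorial (l + 2 * a + 2) = (l + 2 * a + 2) * Nat.factorial (l + 2 * a + 1) := by
      rw [show l + 2 * a + 2 = (l + 2 * a + 1) + 1 by ring, Nat.factorial_succ]
    have f3 : Nat.factorial (a + 1) = (a + 1) * Nat.factorial a := Nat.factorial_succ a
    have f4 : Nat.factorial (l + 1) = (l + 1) * Nat.factorial l := Nat.factorial_succ l
    rw [f1, f2, f3, f4]
    have h0 : (Nat.factorial (l + 2 * a + 1) : ℝ) ≠ 0 := by positivity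
    have h1 : (Nat.factorial a : ℝ) ≠ 0 := by positivity
    have h2 : (Nat.factorial l : ℝ) ≠ 0 := by positivity
    have h3 : (2 : ℝ) ^ a ≠ 0 := by positivity
    push_cast
    field_simp
    ring


lemma iterDeriv_hasDerivAt (g0 : ℝ → ℝ) (hg : ContDiffOn ℝ (⊤ : ℕ∞) g0 (Set.Ioi 0))
    (k : ℕ) {r : ℝ} (hr : 0 < r) :
    HasDerivAt (iteratedDeriv k g0) (iteratedDeriv (k + 1) g0 r) r := by
  have hmem : Set.Ioi (0:ℝ) ∈ nhds r := isOpen_Ioi.mem_nhds hr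
  have heq : Set.EqOn (iteratedDerivWithin k g0 (Set.Ioi 0)) (iteratedDeriv k g0)
      (Set.Ioi 0) := by
    intro x hx
    rw [iteratedDerivWithin_eq_iteratedFDerivWithin, iteratedDeriv_eq_iteratedFDeriv,
      iteratedFDerivWithin_of_isOpen k isOpen_Ioi hx]
  have hdiff : DifferentiableWithinAt ℝ (iteratedDerivWithin k g0 (Set.Ioi 0)) (Set.Ioi 0) r := by
    refine (hg.differentiableOn_iteratedDerivWithin ?_ isOpen_Ioi.uniqueDiffOn) r hr
    exact_mod_cast ENat.coe_lt_top k
  have hdiff2 : DifferentiableAt ℝ (iteratedDeriv k g0) r := by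
    have := (hdiff.differentiableAt hmem)
    exact this.congr_of_eventuallyEq ((Filter.eventuallyEq_of_mem hmem heq).symm)
  have := hdiff2.hasDerivAt
  rwa [← iteratedDeriv_succ] at this

theorem radSeq_formula (g0 : ℝ → ℝ) (hg : ContDiffOn ℝ (⊤ : ℕ∞) g0 (Set.Ioi 0))
    (j : ℕ) (hj : 1 ≤ j) (r : ℝ) (hr : 0 < r) :
    radSeq g0 j r
      = ∑ k ∈ Finset.Icc 1 j,
          (-1 : ℝ) ^ k * dcoef j k * iteratedDeriv k g0 r * r ^ ((k : ℤ) - 2 * j) := by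
  induction j, hj using Nat.le_induction generalizing r with
  | base =>
    simp only [Finset.Icc_self, Finset.sum_singleton]
    rw [show radSeq g0 1 r = -(deriv g0 r) / r from rfl]
    rw [dcoef_eq le_rfl le_rfl]
    norm_num [iteratedDeriv_one]
    ring
  | succ j hj1 IH =>
    have hr' : r ≠ 0 := ne_of_gt hr
    set f : ℕ → ℝ → ℝ := fun k => iteratedDeriv k g0 with hfdef
    have hF : HasDerivAt (fun x : ℝ => ∑ k ∈ Finset.Icc 1 j,
        (-1:ℝ)^k * dcoef j k * f k x * x ^ ((k:ℤ) - 2*j))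
        (∑ k ∈ Finset.Icc 1 j,
          (((-1:ℝ)^k * dcoef j k * f (k+1) r) * r ^ ((k:ℤ) - 2*j)
            + ((-1:ℝ)^k * dcoef j k * f k r)
              * ((((k:ℤ) - 2*j : ℤ) : ℝ) * r ^ ((k:ℤ) - 2*j - 1)))) r := by
      apply HasDerivAt.fun_sum
      intro k hk
      have h1 : HasDerivAt (f k) (f (k+1) r) r := iterDeriv_hasDerivAt g0 hg k hr
      have h2 := hasDerivAt_zpow ((k:ℤ) - 2*j) r (Or.inl hr')
      exact (h1.const_mul ((-1:ℝ)^k * dcoef j k)).mul h2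
    have hEq : deriv (radSeq g0 j) r = deriv (fun x : ℝ => ∑ k ∈ Finset.Icc 1 j,
        (-1:ℝ)^k * dcoef j k * f k x * x ^ ((k:ℤ) - 2*j)) r := by
      apply Filter.EventuallyEq.deriv_eq
      filter_upwards [isOpen_Ioi.mem_nhds hr] with x hx
      exact IH x hx
    rw [show radSeq g0 (j+1) r = -(deriv (radSeq g0 j) r) / r from rfl, hEq, hF.deriv]
    rw [div_eq_iff hr', neg_eq_iff_eq_neg, Finset.sum_mul, ← Finset.sum_neg_distrib]
    have hsum1 : ∀ k ∈ Finset.Icc 1 (j+1),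
        -((-1:ℝ)^k * dcoef (j+1) k * f k r * r ^ ((k:ℤ) - 2*((j+1:ℕ):ℤ)) * r)
          = ((-1:ℝ)^(k+1) * dcoef j (k-1) * f k r * r ^ ((k:ℤ) - 2*(j:ℤ) - 1))
            + ((-1:ℝ)^(k+1) * (2*(j:ℝ) - (k:ℝ)) * dcoef j k * f k r
                * r ^ ((k:ℤ) - 2*(j:ℤ) - 1)) := by
      intro k hk
      simp only [Finset.mem_Icc] at hk
      rw [dcoef_rec j k hj1 hk.1 hk.2]
      rw [show ((k:ℤ) - 2*((j+1:ℕ):ℤ)) = ((k:ℤ) - 2*(j:ℤ) - 1) + (-1) by push_cast; ring,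
        zpow_add₀ hr', zpow_neg_one]
      field_simp
      ring
    rw [Finset.sum_congr rfl hsum1, Finset.sum_add_distrib]
    have hU : ∑ k ∈ Finset.Icc 1 (j+1),
        (-1:ℝ)^(k+1) * dcoef j (k-1) * f k r * r ^ ((k:ℤ) - 2*(j:ℤ) - 1)
        = ∑ k ∈ Finset.Icc 1 j,
            ((-1:ℝ)^k * dcoef j k * f (k+1) r) * r ^ ((k:ℤ) - 2*(j:ℤ)) := by
      rw [← Finset.Ico_add_one_right_eq_Icc, Finset.sum_Ico_eq_sum_range,
        ← Finset.Ico_add_one_right_eq_Icc, Finset.sum_Ico_eq_sum_range]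
      have e1 : j + 1 + 1 - 1 = j + 1 := by omega
      have e2 : j + 1 - 1 = j := by omega
      rw [e1, e2, Finset.sum_range_succ']
      have h0 : (-1:ℝ)^(1+0+1) * dcoef j (1+0-1) * f (1+0) r
          * r ^ (((1+0:ℕ):ℤ) - 2*(j:ℤ) - 1) = 0 := by
        rw [show dcoef j (1+0-1) = 0 from dcoef_zero (by omega)]
        ring
      rw [h0, add_zero]
      refine Finset.sum_congr rfl fun i hi => ?_
      rw [show 1 + (i+1) = i + 2 from by omega]
      rw [show i + 2 - 1 = i + 1 from by omega]
      rw [show 1 + i = i + 1 from by omega]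
      rw [show ((i+2:ℕ):ℤ) - 2*(j:ℤ) - 1 = ((i+1:ℕ):ℤ) - 2*(j:ℤ) from by push_cast; ring]
      rw [show i + 1 + 1 = i + 2 from by omega]
      ring
    have hV : ∑ k ∈ Finset.Icc 1 (j+1),
        (-1:ℝ)^(k+1) * (2*(j:ℝ) - (k:ℝ)) * dcoef j k * f k r * r ^ ((k:ℤ) - 2*(j:ℤ) - 1)
        = ∑ k ∈ Finset.Icc 1 j,
            ((-1:ℝ)^k * dcoef j k * f k r)
              * ((((k:ℤ) - 2*(j:ℤ) : ℤ) : ℝ) * r ^ ((k:ℤ) - 2*(j:ℤ) - 1)) := by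
      rw [Finset.sum_Icc_succ_top (by omega : 1 ≤ j + 1)]
      rw [show dcoef j (j+1) = 0 from dcoef_zero (by omega)]
      rw [show (-1:ℝ)^(j+1+1) * (2*(j:ℝ) - ((j+1:ℕ):ℝ)) * 0 * f (j+1) r
          * r ^ (((j+1:ℕ):ℤ) - 2*(j:ℤ) - 1) = 0 from by ring, add_zero]
      refine Finset.sum_congr rfl fun k hk => ?_
      push_cast
      ring
    rw [Finset.sum_add_distrib, hU, hV]
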